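/- Split/join correctness of smap on conditionals: for all as : List a and σ : s₁ × s₂ × s₃ × s₄, stmap (f₄* ∘ [f₂*, f₃*] ∘ f₁*) (as, σ) = let (as', σ₁) := stmap f₁* (as, σ); (bs, cs, flags) := split as'; (bs', σ₂) := stmap f₂* (bs, σ₁); (cs', σ₃) := stmap f₃* (cs, σ₂); ds := join (bs', cs', flags) in stmap f₄* (ds, σ₃). That is, the elementwise stateful map of the composite state thread equals the task-parallel evaluation that splits the intermediate list of sum values, maps f₂* and f₃* over the two branches separately (in either order, since they touch disjoint state components), and joins the results using the recorded flags before applying f₄*. -/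
import Mathlib


/-- The stateful list map of a function `f : α × S → β × S` (auxiliary curried form). -/
def stmapAux {α β S : Type} (f : α × S → β × S) : List α → S → List β × S
  | [], σ => ([], σ)
  | x :: xs, σ =>
    let r := f (x, σ)
    let r' := stmapAux f xs r.2
    (r.1 :: r'.1, r'.2)

/-- The stateful list map of a function `f : α × S → β × S`. -/
def stmap {α β S : Type} (f : α × S → β × S) : List α × S → List β × S :=
  fun z => stmapAux f z.1 z.2

/-- `split` decomposes a list of sum values into the list of left values, the list
of right values, and a list of boolean flags recording the original order. -/
def split {b c : Type} : List (b ⊕ c) → List b × List c × List Bool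
  | [] => ([], [], [])
  | Sum.inl x :: xs =>
    let r := split xs
    (x :: r.1, r.2.1, true :: r.2.2)
  | Sum.inr y :: xs =>
    let r := split xs
    (r.1, y :: r.2.1, false :: r.2.2)

/-- Auxiliary curried form of `join`. -/
def joinAux {b c : Type} : List b → List c → List Bool → List (b ⊕ c)
  | x :: bs, cs, true :: flags => Sum.inl x :: joinAux bs cs flags
  | bs, y :: cs, false :: flags => Sum.inr y :: joinAux bs cs flags
  | _, _, _ => []

/-- `join` interleaves a list of left values and a list of right values into a single
list of sum values, in the order prescribed by the list of boolean flags; it returns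
`[]` in all mismatched cases. -/
def join {b c : Type} (z : List b × List c × List Bool) : List (b ⊕ c) :=
  joinAux z.1 z.2.1 z.2.2

section Conditionals

variable {a b c b' c' d s₁ s₂ s₃ s₄ : Type}

/-- Extension `f₁*` of `f₁` to the global state `S = s₁ × s₂ × s₃ × s₄`: acts on the
first state component and leaves the other three unchanged. -/
def ext₁ (f₁ : a × s₁ → (b ⊕ c) × s₁) :
    a × (s₁ × s₂ × s₃ × s₄) → (b ⊕ c) × (s₁ × s₂ × s₃ × s₄) :=
  fun z =>
    let r := f₁ (z.1, z.2.1)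
    (r.1, (r.2, z.2.2.1, z.2.2.2.1, z.2.2.2.2))

/-- Extension `f₂*` of `f₂` to the global state: acts on the second state component. -/
def ext₂ (f₂ : b × s₂ → b' × s₂) :
    b × (s₁ × s₂ × s₃ × s₄) → b' × (s₁ × s₂ × s₃ × s₄) :=
  fun z =>
    let r := f₂ (z.1, z.2.2.1)
    (r.1, (z.2.1, r.2, z.2.2.2.1, z.2.2.2.2))

/-- Extension `f₃*` of `f₃` to the global state: acts on the third state component. -/
def ext₃ (f₃ : c × s₃ → c' × s₃) :
    c × (s₁ × s₂ × s₃ × s₄) → c' × (s₁ × s₂ × s₃ × s₄) :=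
  fun z =>
    let r := f₃ (z.1, z.2.2.2.1)
    (r.1, (z.2.1, z.2.2.1, r.2, z.2.2.2.2))

/-- Extension `f₄*` of `f₄` to the global state: acts on the fourth state component. -/
def ext₄ (f₄ : (b' ⊕ c') × s₄ → d × s₄) :
    (b' ⊕ c') × (s₁ × s₂ × s₃ × s₄) → d × (s₁ × s₂ × s₃ × s₄) :=
  fun z =>
    let r := f₄ (z.1, z.2.2.2.2)
    (r.1, (z.2.1, z.2.2.1, z.2.2.2.1, r.2))

/-- The coproduct state thread `[F, G]` obtained from the universal property of the
coproduct: applies `F` on left injections and `G` on right injections. -/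
def sumElimST {S : Type} (F : b × S → b' × S) (G : c × S → c' × S) :
    (b ⊕ c) × S → (b' ⊕ c') × S
  | (Sum.inl x, σ) =>
    let r := F (x, σ)
    (Sum.inl r.1, r.2)
  | (Sum.inr x, σ) =>
    let r := G (x, σ)
    (Sum.inr r.1, r.2)

lemma stmapAux_ext₁ (f₁ : a × s₁ → (b ⊕ c) × s₁) :
    ∀ (as : List a) (σ₁ : s₁) (σ₂ : s₂) (σ₃ : s₃) (σ₄ : s₄),
    stmapAux (ext₁ f₁) as (σ₁, σ₂, σ₃, σ₄) =
      ((stmapAux f₁ as σ₁).1, ((stmapAux f₁ as σ₁).2, σ₂, σ₃, σ₄))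
  | [], _, _, _, _ => rfl
  | x :: xs, σ₁, σ₂, σ₃, σ₄ => by
    simp [stmapAux, ext₁, stmapAux_ext₁ f₁ xs]

lemma stmapAux_ext₂ (f₂ : b × s₂ → b' × s₂) :
    ∀ (bs : List b) (σ₁ : s₁) (σ₂ : s₂) (σ₃ : s₃) (σ₄ : s₄),
    stmapAux (ext₂ (b' := b') f₂) bs (σ₁, σ₂, σ₃, σ₄) =
      ((stmapAux f₂ bs σ₂).1, (σ₁, (stmapAux f₂ bs σ₂).2, σ₃, σ₄))
  | [], _, _, _, _ => rfl
  | x :: xs, σ₁, σ₂, σ₃, σ₄ => by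
    simp [stmapAux, ext₂, stmapAux_ext₂ f₂ xs]

lemma stmapAux_ext₃ (f₃ : c × s₃ → c' × s₃) :
    ∀ (cs : List c) (σ₁ : s₁) (σ₂ : s₂) (σ₃ : s₃) (σ₄ : s₄),
    stmapAux (ext₃ (c' := c') f₃) cs (σ₁, σ₂, σ₃, σ₄) =
      ((stmapAux f₃ cs σ₃).1, (σ₁, σ₂, (stmapAux f₃ cs σ₃).2, σ₄))
  | [], _, _, _, _ => rfl
  | x :: xs, σ₁, σ₂, σ₃, σ₄ => by
    simp [stmapAux, ext₃, stmapAux_ext₃ f₃ xs]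

lemma stmapAux_ext₄ (f₄ : (b' ⊕ c') × s₄ → d × s₄) :
    ∀ (ds : List (b' ⊕ c')) (σ₁ : s₁) (σ₂ : s₂) (σ₃ : s₃) (σ₄ : s₄),
    stmapAux (ext₄ f₄) ds (σ₁, σ₂, σ₃, σ₄) =
      ((stmapAux f₄ ds σ₄).1, (σ₁, σ₂, σ₃, (stmapAux f₄ ds σ₄).2))
  | [], _, _, _, _ => rfl
  | x :: xs, σ₁, σ₂, σ₃, σ₄ => by
    simp [stmapAux, ext₄, stmapAux_ext₄ f₄ xs]

lemma stmapAux_key (f₁ : a × s₁ → (b ⊕ c) × s₁) (f₂ : b × s₂ → b' × s₂)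
    (f₃ : c × s₃ → c' × s₃) (f₄ : (b' ⊕ c') × s₄ → d × s₄) :
    ∀ (as : List a) (σ₁ : s₁) (σ₂ : s₂) (σ₃ : s₃) (σ₄ : s₄),
    stmapAux (ext₄ (d := d) f₄ ∘ sumElimST (ext₂ f₂) (ext₃ f₃) ∘ ext₁ f₁)
        as (σ₁, σ₂, σ₃, σ₄) =
      (let r₁ := stmapAux f₁ as σ₁
       let sp := split r₁.1
       let r₂ := stmapAux f₂ sp.1 σ₂
       let r₃ := stmapAux f₃ sp.2.1 σ₃
       let r₄ := stmapAux f₄ (joinAux r₂.1 r₃.1 sp.2.2) σ₄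
       (r₄.1, (r₁.2, r₂.2, r₃.2, r₄.2)))
  | [], _, _, _, _ => rfl
  | x :: xs, σ₁, σ₂, σ₃, σ₄ => by
    have ih := stmapAux_key f₁ f₂ f₃ f₄ xs
    rcases h₁ : f₁ (x, σ₁) with ⟨v, τ₁⟩
    cases v with
    | inl y =>
      rcases h₂ : f₂ (y, σ₂) with ⟨y', τ₂⟩
      simp only [stmapAux, ext₁, ext₂, ext₄, sumElimST, Function.comp, h₁, h₂,
        split, joinAux, ih]
    | inr z =>
      rcases h₃ : f₃ (z, σ₃) with ⟨z', τ₃⟩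
      simp only [stmapAux, ext₁, ext₃, ext₄, sumElimST, Function.comp, h₁, h₃,
        split, joinAux, ih]

/-- split/join correctness of `smap` on conditionals: the elementwise
stateful map of the composite state thread `f₄* ∘ [f₂*, f₃*] ∘ f₁*` equals the
task-parallel evaluation that splits the intermediate list, maps `f₂*` and `f₃*`
over the two branches separately, and joins the results using the recorded flags
before applying `f₄*`. -/
theorem stmap_conditional
    (f₁ : a × s₁ → (b ⊕ c) × s₁) (f₂ : b × s₂ → b' × s₂)
    (f₃ : c × s₃ → c' × s₃) (f₄ : (b' ⊕ c') × s₄ → d × s₄)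
    (as : List a) (σ : s₁ × s₂ × s₃ × s₄) :
    stmap (ext₄ (d := d) f₄ ∘ sumElimST (ext₂ f₂) (ext₃ f₃) ∘ ext₁ f₁) (as, σ) =
      (let r₁ := stmap (ext₁ (b := b) (c := c) f₁) (as, σ)
       let sp := split r₁.1
       let r₂ := stmap (ext₂ (b' := b') f₂) (sp.1, r₁.2)
       let r₃ := stmap (ext₃ (c' := c') f₃) (sp.2.1, r₂.2)
       let ds := join (r₂.1, r₃.1, sp.2.2)
       stmap (ext₄ f₄) (ds, r₃.2)) := by
  obtain ⟨σ₁, σ₂, σ₃, σ₄⟩ := σ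
  simp only [stmap, join, stmapAux_key, stmapAux_ext₁, stmapAux_ext₂,
    stmapAux_ext₃, stmapAux_ext₄]

end Conditionals
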